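/- arXiv:1508.07933 — 3 statements merged into one kernel-verified Lean document; each statement's English description precedes it below -/
import Mathlib

section
/- Let f : ℝⁿ → ℝ be differentiable with G-Lipschitz gradient, and let u ∈ ℝⁿ be the vector with coordinates uᵢ = ⟨∇f(xᵢ), eᵢ⟩ for points x₁,…,xₙ ∈ ℝⁿ. Then for any x̄ ∈ ℝⁿ, ‖∇f(x̄) − u‖ ≤ G·Σᵢ₌₁ⁿ ‖x̄ − xᵢ‖. -/
open Finset

theorem PiLp.norm_le_sum_norm {p : ENNReal} [Fact (1 ≤ p)] {ι : Type*} [Fintype ι]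
    {β : ι → Type*} [∀ i, SeminormedAddCommGroup (β i)] (x : PiLp p β) :
    ‖x‖ ≤ ∑ i, ‖x i‖ := by
  classical
  have hx : ∑ i, PiLp.single p i (x i) = x := by
    ext j
    simp
  calc ‖x‖ = ‖∑ i, PiLp.single p i (x i)‖ := by rw [hx]
    _ ≤ ∑ i, ‖PiLp.single p i (x i)‖ := norm_sum_le _ _
    _ = ∑ i, ‖x i‖ := by simp only [PiLp.norm_single]

theorem stmt_7_general {n : ℕ} (f : EuclideanSpace ℝ (Fin n) → ℝ) (G : ℝ)
    (hG : ∀ a b, ‖gradient f a - gradient f b‖ ≤ G * ‖a - b‖)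
    (x : Fin n → EuclideanSpace ℝ (Fin n)) (u : EuclideanSpace ℝ (Fin n))
    (hu : ∀ i, u i = gradient f (x i) i)
    (xbar : EuclideanSpace ℝ (Fin n)) :
    ‖gradient f xbar - u‖ ≤ G * ∑ i, ‖xbar - x i‖ :=
  calc ‖gradient f xbar - u‖
      ≤ ∑ i, ‖(gradient f xbar - u) i‖ := PiLp.norm_le_sum_norm _
    _ = ∑ i, ‖(gradient f xbar - gradient f (x i)) i‖ := by simp only [PiLp.sub_apply, hu]
    _ ≤ ∑ i, ‖gradient f xbar - gradient f (x i)‖ :=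
        sum_le_sum fun i _ => PiLp.norm_apply_le _ i
    _ ≤ ∑ i, G * ‖xbar - x i‖ := sum_le_sum fun i _ => hG _ _
    _ = G * ∑ i, ‖xbar - x i‖ := (mul_sum _ _ _).symm

theorem stmt_7 {n : ℕ} (f : EuclideanSpace ℝ (Fin n) → ℝ) (G : ℝ)
    (hdiff : Differentiable ℝ f)
    (hG : ∀ a b, ‖gradient f a - gradient f b‖ ≤ G * ‖a - b‖)
    (x : Fin n → EuclideanSpace ℝ (Fin n)) (u : EuclideanSpace ℝ (Fin n))
    (hu : ∀ i, u i = gradient f (x i) i)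
    (xbar : EuclideanSpace ℝ (Fin n)) :
    ‖gradient f xbar - u‖ ≤ G * ∑ i, ‖xbar - x i‖ :=
  stmt_7_general f G hG x u hu xbar
end

section
/- Suppose a sequence zᵏ(t) ∈ ℝⁿ satisfies zᵏ(t) = (1/rₖ)·Σ_{s=0}^{t-1} M^{t-s-1} uₖ(s) eₖ and z̄ᵏ(t) = Σ_{s=0}^{t-1} uₖ(s), where M is row-stochastic and reversible with respect to a strictly positive probability vector r, |uₖ(s)| ≤ L for all s, and λ ∈ (0,1] is the spectral gap of M. Then for all t ≥ 1, ‖zᵏ(t) − z̄ᵏ(t)·1‖² ≤ L² / (r*³·(1 − √(1−λ))²), where r* = minᵢ rᵢ. -/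
/-!
Reversibility makes `M` a contraction of `L²(r)`, with norm `‖v‖²_r = r ⬝ᵥ v ^ 2`, that fixes
the constants, and the spectral gap sharpens this to a contraction by `√(1 - λ)` on the vectors
of `r`-mean zero. As `M 1 = 1`, `z(t) - z̄(t) 1 = ∑ₛ u(s) Mᵗ⁻ˢ⁻¹ f₀` with `f₀ = eₖ / rₖ - 1`,
which has `r`-mean zero and `‖f₀‖²_r = 1 / rₖ - 1 ≤ 1 / r*`. Since `r* ‖v‖² ≤ ‖v‖²_r`, the
`s`-th term has Euclidean norm at most `L (1 - λ)^((t-s-1)/2) / r*`, and the geometric series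
bounds the sum by `L / (r* (1 - √(1 - λ)))`; squaring and using `r* ≤ 1` gives the claim.
-/

open Finset Matrix

section ReversibleChain

variable {ι : Type*} [Fintype ι] {M : Matrix ι ι ℝ} {r : ι → ℝ}

lemma vecMul_eq_self_of_reversible (hMrow : ∀ i, ∑ j, M i j = 1)
    (hrev : ∀ i j, r i * M i j = r j * M j i) : r ᵥ* M = r := by
  funext j
  change ∑ i, r i * M i j = r j
  rw [sum_congr rfl fun i _ => hrev i j, ← mul_sum, hMrow, mul_one]

lemma dotProduct_mulVec_of_vecMul_eq_self (hstat : r ᵥ* M = r) (f : ι → ℝ) :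
    r ⬝ᵥ (M *ᵥ f) = r ⬝ᵥ f := by
  rw [dotProduct_mulVec, hstat]

lemma mulVec_apply_sq_le [DecidableEq ι] (hM : M ∈ rowStochastic ℝ ι) (f : ι → ℝ) (i : ι) :
    (M *ᵥ f) i ^ 2 ≤ (M *ᵥ f ^ 2) i := by
  have h := sum_sq_le_sum_mul_sum_of_sq_le_mul univ (r := fun j => M i j * f j)
    (fun j _ => nonneg_of_mem_rowStochastic hM (i := i) (j := j))
    (fun j _ => mul_nonneg (nonneg_of_mem_rowStochastic hM) (sq_nonneg (f j)))
    (fun j _ => (by ring : (M i j * f j) ^ 2 = M i j * (M i j * f j ^ 2)).le)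
  rwa [sum_row_of_mem_rowStochastic hM, one_mul] at h

lemma dotProduct_mulVec_sq_le [DecidableEq ι] (hM : M ∈ rowStochastic ℝ ι) (hr : 0 ≤ r)
    (hstat : r ᵥ* M = r) (f : ι → ℝ) : r ⬝ᵥ (M *ᵥ f) ^ 2 ≤ r ⬝ᵥ f ^ 2 :=
  calc r ⬝ᵥ (M *ᵥ f) ^ 2 ≤ r ⬝ᵥ (M *ᵥ f ^ 2) :=
        dotProduct_le_dotProduct_of_nonneg_left (mulVec_apply_sq_le hM f) hr
    _ = r ⬝ᵥ f ^ 2 := dotProduct_mulVec_of_vecMul_eq_self hstat _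

variable (M r) in
noncomputable def spectralGap : ℝ :=
  sInf {c : ℝ | ∃ f : ι → ℝ, f ≠ 0 ∧ r ⬝ᵥ f = 0 ∧
    c = (r ⬝ᵥ f ^ 2 - r ⬝ᵥ (M *ᵥ f) ^ 2) / r ⬝ᵥ f ^ 2}

lemma dotProduct_mulVec_sq_le_one_sub_spectralGap_mul [DecidableEq ι]
    (hM : M ∈ rowStochastic ℝ ι) (hr : ∀ i, 0 < r i) (hstat : r ᵥ* M = r) {f : ι → ℝ}
    (hf : r ⬝ᵥ f = 0) : r ⬝ᵥ (M *ᵥ f) ^ 2 ≤ (1 - spectralGap M r) * r ⬝ᵥ f ^ 2 := by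
  rcases eq_or_ne f 0 with rfl | hf₀
  · simp
  have hr₀ : 0 ≤ r := fun i => (hr i).le
  have hQ : 0 < r ⬝ᵥ f ^ 2 := by
    obtain ⟨i, hi⟩ := Function.ne_iff.mp hf₀
    exact sum_pos' (fun j _ => mul_nonneg (hr j).le (sq_nonneg (f j)))
      ⟨i, mem_univ i, mul_pos (hr i) (pow_two_pos_of_ne_zero hi)⟩
  have hbdd : BddBelow {c : ℝ | ∃ f : ι → ℝ, f ≠ 0 ∧ r ⬝ᵥ f = 0 ∧
      c = (r ⬝ᵥ f ^ 2 - r ⬝ᵥ (M *ᵥ f) ^ 2) / r ⬝ᵥ f ^ 2} := by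
    refine ⟨0, ?_⟩
    rintro _ ⟨g, -, -, rfl⟩
    exact div_nonneg (sub_nonneg.2 (dotProduct_mulVec_sq_le hM hr₀ hstat g))
      (dotProduct_nonneg_of_nonneg hr₀ fun i => sq_nonneg (g i))
  have hgap := csInf_le hbdd ⟨f, hf₀, hf, rfl⟩
  rw [← spectralGap, le_div_iff₀ hQ] at hgap
  linarith

lemma dotProduct_pow_mulVec_sq_le [DecidableEq ι] (hstat : r ᵥ* M = r) {c : ℝ} (hc : 0 ≤ c)
    (hstep : ∀ f, r ⬝ᵥ f = 0 → r ⬝ᵥ (M *ᵥ f) ^ 2 ≤ c * r ⬝ᵥ f ^ 2) (j : ℕ) {f : ι → ℝ}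
    (hf : r ⬝ᵥ f = 0) : r ⬝ᵥ (M ^ j *ᵥ f) ^ 2 ≤ c ^ j * r ⬝ᵥ f ^ 2 := by
  induction j generalizing f with
  | zero => simp
  | succ j ih =>
    rw [pow_succ M, ← mulVec_mulVec]
    calc r ⬝ᵥ (M ^ j *ᵥ M *ᵥ f) ^ 2 ≤ c ^ j * r ⬝ᵥ (M *ᵥ f) ^ 2 :=
          ih (by rwa [dotProduct_mulVec_of_vecMul_eq_self hstat])
      _ ≤ c ^ j * (c * r ⬝ᵥ f ^ 2) := by gcongr; exact hstep f hf
      _ = c ^ (j + 1) * r ⬝ᵥ f ^ 2 := by ring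

lemma dotProduct_single_inv_sub_one [DecidableEq ι] (hrsum : ∑ i, r i = 1) {k : ι}
    (hk : r k ≠ 0) : r ⬝ᵥ (Pi.single k (r k)⁻¹ - 1) = 0 := by
  rw [dotProduct_sub, dotProduct_single, dotProduct_one, hrsum, mul_inv_cancel₀ hk, sub_self]

lemma dotProduct_sq_single_inv_sub_one [DecidableEq ι] (hrsum : ∑ i, r i = 1) {k : ι}
    (hk : r k ≠ 0) : r ⬝ᵥ (Pi.single k (r k)⁻¹ - 1) ^ 2 = (r k)⁻¹ - 1 := by
  have hsq : (Pi.single k (r k)⁻¹ - 1 : ι → ℝ) ^ 2 =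
      (Pi.single k ((r k)⁻¹ ^ 2 - 2 * (r k)⁻¹) : ι → ℝ) + 1 := by
    ext i
    rcases eq_or_ne i k with rfl | hi
    · simp only [Pi.pow_apply, Pi.sub_apply, Pi.add_apply, Pi.single_eq_same, Pi.one_apply]
      ring
    · simp [Pi.single_eq_of_ne hi]
  rw [hsq, dotProduct_add, dotProduct_single, dotProduct_one, hrsum]
  field_simp
  ring

lemma mul_norm_toLp_sq_le {a : ℝ} (ha : ∀ i, a ≤ r i) (v : ι → ℝ) :
    a * ‖WithLp.toLp 2 v‖ ^ 2 ≤ r ⬝ᵥ v ^ 2 := by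
  rw [EuclideanSpace.real_norm_sq_eq, mul_sum]
  exact sum_le_sum fun i _ => mul_le_mul_of_nonneg_right (ha i) (sq_nonneg (v i))

lemma sum_pow_mulVec_single_sub_one [DecidableEq ι] (hM : M ∈ rowStochastic ℝ ι) (k : ι) (a : ℝ)
    (u : ℕ → ℝ) (t : ℕ) :
    (fun i => a * ∑ s ∈ range t, (M ^ (t - s - 1) *ᵥ Pi.single k (u s)) i - ∑ s ∈ range t, u s) =
      ∑ s ∈ range t, u s • M ^ (t - s - 1) *ᵥ (Pi.single k a - 1) := by
  ext i
  simp only [mulVec_sub, one_vecMul_of_mem_rowStochastic (pow_mem hM _), mul_sum,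
    ← sum_sub_distrib, Finset.sum_apply]
  refine sum_congr rfl fun s _ => ?_
  simp only [mulVec_single, Pi.smul_apply, col_apply, MulOpposite.smul_eq_mul_unop,
    MulOpposite.unop_op, op_smul_eq_smul, Pi.sub_apply, smul_eq_mul, Pi.one_apply]
  ring

lemma norm_pow_mulVec_single_inv_sub_one_le [DecidableEq ι] (hstat : r ᵥ* M = r)
    (hrsum : ∑ i, r i = 1) {a : ℝ} (ha : 0 < a) (har : ∀ i, a ≤ r i) {c : ℝ} (hc : 0 ≤ c)
    (hstep : ∀ f, r ⬝ᵥ f = 0 → r ⬝ᵥ (M *ᵥ f) ^ 2 ≤ c * r ⬝ᵥ f ^ 2) (k : ι) (j : ℕ) :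
    ‖WithLp.toLp 2 (M ^ j *ᵥ (Pi.single k (r k)⁻¹ - 1))‖ ≤ a⁻¹ * √c ^ j := by
  have hk : r k ≠ 0 := (ha.trans_le (har k)).ne'
  have hQ : a * ‖WithLp.toLp 2 (M ^ j *ᵥ (Pi.single k (r k)⁻¹ - 1))‖ ^ 2 ≤ c ^ j * a⁻¹ :=
    calc _ ≤ r ⬝ᵥ (M ^ j *ᵥ (Pi.single k (r k)⁻¹ - 1)) ^ 2 := mul_norm_toLp_sq_le har _
      _ ≤ c ^ j * ((r k)⁻¹ - 1) := by
        simpa only [dotProduct_sq_single_inv_sub_one hrsum hk] using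
          dotProduct_pow_mulVec_sq_le hstat hc hstep j (dotProduct_single_inv_sub_one hrsum hk)
      _ ≤ c ^ j * a⁻¹ := by
        gcongr
        exact (sub_le_self _ zero_le_one).trans (inv_anti₀ ha (har k))
  rw [← pow_le_pow_iff_left₀ (norm_nonneg _) (by positivity) two_ne_zero, mul_pow, ← pow_mul,
    mul_comm j, pow_mul, Real.sq_sqrt hc]
  calc _ = a⁻¹ * (a * ‖WithLp.toLp 2 (M ^ j *ᵥ (Pi.single k (r k)⁻¹ - 1))‖ ^ 2) := by
        field_simp
    _ ≤ a⁻¹ * (c ^ j * a⁻¹) := by gcongr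
    _ = a⁻¹ ^ 2 * c ^ j := by ring

end ReversibleChain

lemma norm_sum_range_smul_le {E : Type*} [SeminormedAddCommGroup E] [NormedSpace ℝ E]
    {u : ℕ → ℝ} {L : ℝ} (hu : ∀ s, |u s| ≤ L) {w : ℕ → E} {C ρ : ℝ} (hρ₀ : 0 ≤ ρ) (hρ₁ : ρ < 1)
    (hw : ∀ j, ‖w j‖ ≤ C * ρ ^ j) (t : ℕ) :
    ‖∑ s ∈ range t, u s • w (t - s - 1)‖ ≤ L * C / (1 - ρ) := by
  have hL : 0 ≤ L := (abs_nonneg _).trans (hu 0)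
  have hC : 0 ≤ C := (norm_nonneg _).trans ((hw 0).trans_eq (by ring))
  calc ‖∑ s ∈ range t, u s • w (t - s - 1)‖
      ≤ ∑ s ∈ range t, L * (C * ρ ^ (t - 1 - s)) := by
        refine (norm_sum_le _ _).trans (sum_le_sum fun s _ => ?_)
        rw [norm_smul, Real.norm_eq_abs, Nat.sub_right_comm]
        exact mul_le_mul (hu s) (hw _) (norm_nonneg _) hL
    _ = L * C * ∑ j ∈ Ico 0 t, ρ ^ j := by
        rw [sum_range_reflect (fun j => L * (C * ρ ^ j)), ← range_eq_Ico, mul_sum]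
        simp only [mul_assoc]
    _ ≤ L * C * (ρ ^ 0 / (1 - ρ)) := by gcongr; exact geom_sum_Ico_le_of_lt_one hρ₀ hρ₁
    _ = L * C / (1 - ρ) := by ring

theorem stmt_11_general {n : ℕ} (M : Matrix (Fin n) (Fin n) ℝ) (r : Fin n → ℝ)
    (hrpos : ∀ i, 0 < r i) (hrsum : ∑ i, r i = 1)
    (hMnn : ∀ i j, 0 ≤ M i j) (hMrow : ∀ i, ∑ j, M i j = 1)
    (hrev : ∀ i j, r i * M i j = r j * M j i)
    (lam : ℝ)
    (hlam : lam = sInf {c : ℝ | ∃ f : Fin n → ℝ, f ≠ 0 ∧ (∑ i, r i * f i) = 0 ∧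
      c = ((∑ i, r i * (f i) ^ 2) - ∑ i, r i * ((M.mulVec f) i) ^ 2)
            / (∑ i, r i * (f i) ^ 2)})
    (hlampos : 0 < lam) (hlamle : lam ≤ 1)
    (rstar : ℝ) (hrstar : IsLeast (Set.range r) rstar)
    (k : Fin n) (u : ℕ → ℝ) (L : ℝ) (hu : ∀ s, |u s| ≤ L)
    (z : ℕ → Fin n → ℝ) (zbar : ℕ → ℝ)
    (hz : ∀ t i, z t i =
      (1 / r k) * ∑ s ∈ Finset.range t, ((M ^ (t - s - 1)).mulVec (Pi.single k (u s))) i)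
    (hzbar : ∀ t, zbar t = ∑ s ∈ Finset.range t, u s)
    (t : ℕ) :
    ∑ i, (z t i - zbar t) ^ 2 ≤
      L ^ 2 / (rstar ^ 3 * (1 - Real.sqrt (1 - lam)) ^ 2) := by
  obtain ⟨⟨i₀, rfl⟩, hmin⟩ := hrstar
  have hM : M ∈ rowStochastic ℝ (Fin n) := mem_rowStochastic_iff_sum.2 ⟨hMnn, hMrow⟩
  have hstat := vecMul_eq_self_of_reversible hMrow hrev
  have hgap : lam = spectralGap M r := hlam
  have hlam₁ : 0 ≤ 1 - lam := by linarith
  have hρ₁ : √(1 - lam) < 1 := by rw [Real.sqrt_lt' one_pos]; linarith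
  have hw := norm_pow_mulVec_single_inv_sub_one_le hstat hrsum (hrpos i₀) (fun i => hmin ⟨i, rfl⟩)
    hlam₁ (fun f hf => hgap ▸ dotProduct_mulVec_sq_le_one_sub_spectralGap_mul hM hrpos hstat hf) k
  have hdecomp : WithLp.toLp 2 (fun i => z t i - zbar t) =
      ∑ s ∈ range t, u s • WithLp.toLp 2 (M ^ (t - s - 1) *ᵥ (Pi.single k (r k)⁻¹ - 1)) := by
    simp only [hz, hzbar, one_div, sum_pow_mulVec_single_sub_one hM, WithLp.toLp_sum,
      WithLp.toLp_smul]
  have hr₁ : r i₀ ≤ 1 := hrsum ▸ single_le_sum (fun i _ => (hrpos i).le) (mem_univ i₀)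
  have hρ : 0 < 1 - √(1 - lam) := sub_pos.2 hρ₁
  have hr₀ := hrpos i₀
  calc ∑ i, (z t i - zbar t) ^ 2 = ‖WithLp.toLp 2 (fun i => z t i - zbar t)‖ ^ 2 :=
        by rw [EuclideanSpace.real_norm_sq_eq]
    _ ≤ (L * (r i₀)⁻¹ / (1 - √(1 - lam))) ^ 2 := by
        rw [hdecomp]
        gcongr
        exact norm_sum_range_smul_le hu (Real.sqrt_nonneg _) hρ₁ hw t
    _ = L ^ 2 / (r i₀ ^ 2 * (1 - √(1 - lam)) ^ 2) := by field_simp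
    _ ≤ L ^ 2 / (r i₀ ^ 3 * (1 - √(1 - lam)) ^ 2) := by
        gcongr L ^ 2 / (?_ * _)
        exact pow_le_pow_of_le_one hr₀.le hr₁ (by norm_num)

theorem stmt_11 {n : ℕ} (M : Matrix (Fin n) (Fin n) ℝ) (r : Fin n → ℝ)
    (hrpos : ∀ i, 0 < r i) (hrsum : ∑ i, r i = 1)
    (hMnn : ∀ i j, 0 ≤ M i j) (hMrow : ∀ i, ∑ j, M i j = 1)
    (hrev : ∀ i j, r i * M i j = r j * M j i)
    (lam : ℝ)
    (hlam : lam = sInf {c : ℝ | ∃ f : Fin n → ℝ, f ≠ 0 ∧ (∑ i, r i * f i) = 0 ∧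
      c = ((∑ i, r i * (f i) ^ 2) - ∑ i, r i * ((M.mulVec f) i) ^ 2)
            / (∑ i, r i * (f i) ^ 2)})
    (hlampos : 0 < lam) (hlamle : lam ≤ 1)
    (rstar : ℝ) (hrstar : IsLeast (Set.range r) rstar)
    (k : Fin n) (u : ℕ → ℝ) (L : ℝ) (hu : ∀ s, |u s| ≤ L)
    (z : ℕ → Fin n → ℝ) (zbar : ℕ → ℝ)
    (hz : ∀ t i, z t i =
      (1 / r k) * ∑ s ∈ Finset.range t, ((M ^ (t - s - 1)).mulVec (Pi.single k (u s))) i)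
    (hzbar : ∀ t, zbar t = ∑ s ∈ Finset.range t, u s)
    (t : ℕ) (ht : 1 ≤ t) :
    ∑ i, (z t i - zbar t) ^ 2 ≤
      L ^ 2 / (rstar ^ 3 * (1 - Real.sqrt (1 - lam)) ^ 2) :=
  stmt_11_general M r hrpos hrsum hMnn hMrow hrev lam hlam hlampos hlamle rstar hrstar k u L hu z
    zbar hz hzbar t
end

section
/- Under the hypotheses of the circulation-based algorithm with reversible pair (r,M), Lipschitz updates |uₖ(s)| ≤ L, and spectral gap λ > 0, the total squared disagreement satisfies Σᵢ₌₁ⁿ ‖zᵢ(t) − z̄(t)‖² ≤ nL² / (r*³(1 − √(1−λ))²) for all t ≥ 1, where z̄(t) = Σᵢ rᵢ zᵢ(t) and r* = minᵢ rᵢ. -/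
/-!
Fix a coordinate `k`. The deviation `dᵏ(t) = zᵏ(t) - z̄ᵏ(t) 𝟙` of the agents' `k`-th coordinates
from their `r`-weighted mean has `r`-mean zero, and since `r` is stationary for `M` and `M 𝟙 = 𝟙`
it obeys `dᵏ(t+1) = M dᵏ(t) + uₖ(t) (eₖ / rₖ - 𝟙)`. In the `r`-weighted `ℓ²` norm the spectral
gap makes `M` a contraction by `θ = √(1 - λ)` on mean-zero vectors, so the triangle inequality
gives `‖dᵏ(t)‖ᵣ ≤ L ‖eₖ / rₖ - 𝟙‖ᵣ / (1 - θ)`, where `‖eₖ / rₖ - 𝟙‖ᵣ² = 1 / rₖ - 1`.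
Returning to the unweighted norm costs a factor `1 / r*`; summing over `k` and swapping the
agent and coordinate indices gives the bound.
-/

open Matrix Finset

namespace WeightedConsensus

variable {ι : Type*} [Fintype ι] {r : ι → ℝ}

noncomputable def weightedEmbedding (r : ι → ℝ) : (ι → ℝ) →ₗ[ℝ] EuclideanSpace ℝ ι where
  toFun f := WithLp.toLp 2 fun i => √(r i) * f i
  map_add' f g := by ext i; simp [mul_add]
  map_smul' c f := by ext i; simp [mul_left_comm]

lemma norm_weightedEmbedding_sq (hr : ∀ i, 0 ≤ r i) (f : ι → ℝ) :
    ‖weightedEmbedding r f‖ ^ 2 = ∑ i, r i * f i ^ 2 := by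
  simp [weightedEmbedding, EuclideanSpace.real_norm_sq_eq, mul_pow, Real.sq_sqrt (hr _)]

lemma sum_sq_le_sum_weighted_sq_div {ρ : ℝ} (hρ : 0 < ρ) (hρr : ∀ i, ρ ≤ r i) (f : ι → ℝ) :
    ∑ i, f i ^ 2 ≤ (∑ i, r i * f i ^ 2) / ρ := by
  rw [le_div_iff₀ hρ, sum_mul]
  exact sum_le_sum fun i _ => by
    rw [mul_comm]
    exact mul_le_mul_of_nonneg_right (hρr i) (sq_nonneg _)

def deviation (r f : ι → ℝ) : ι → ℝ := f - (r ⬝ᵥ f) • 1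

lemma dotProduct_deviation (hsum : ∑ i, r i = 1) (f : ι → ℝ) : r ⬝ᵥ deviation r f = 0 := by
  simp [deviation, dotProduct_sub, dotProduct_smul, dotProduct_one, hsum]

lemma le_div_one_sub_of_le_mul_add {x : ℕ → ℝ} {θ c : ℝ} (hθ0 : 0 ≤ θ) (hθ1 : θ < 1)
    (h0 : x 0 ≤ c / (1 - θ)) (hstep : ∀ t, x (t + 1) ≤ θ * x t + c) (t : ℕ) :
    x t ≤ c / (1 - θ) := by
  induction t with
  | zero => exact h0
  | succ t ih =>
    calc x (t + 1) ≤ θ * x t + c := hstep t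
      _ ≤ θ * (c / (1 - θ)) + c := by gcongr
      _ = c / (1 - θ) := by field_simp [(sub_pos.2 hθ1).ne']; ring

variable [DecidableEq ι] {M : Matrix ι ι ℝ}

lemma vecMul_eq_self_of_reversible (hM : M ∈ rowStochastic ℝ ι)
    (hrev : ∀ i j, r i * M i j = r j * M j i) : r ᵥ* M = r := by
  ext j
  simp [vecMul, dotProduct, hrev, ← mul_sum, sum_row_of_mem_rowStochastic hM]

lemma mulVec_apply_sq_le (hM : M ∈ rowStochastic ℝ ι) (f : ι → ℝ) (i : ι) :
    (M *ᵥ f) i ^ 2 ≤ ∑ j, M i j * f j ^ 2 := by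
  simpa [mulVec, dotProduct] using (Even.convexOn_pow even_two).map_sum_le
    (fun j _ => hM.1 i j)
    (sum_row_of_mem_rowStochastic hM i) (fun j _ => Set.mem_univ (f j))

lemma sum_weighted_sq_mulVec_le (hM : M ∈ rowStochastic ℝ ι) (hr : ∀ i, 0 ≤ r i)
    (hstat : r ᵥ* M = r) (f : ι → ℝ) :
    ∑ i, r i * (M *ᵥ f) i ^ 2 ≤ ∑ i, r i * f i ^ 2 :=
  calc ∑ i, r i * (M *ᵥ f) i ^ 2 ≤ ∑ i, r i * ∑ j, M i j * f j ^ 2 := by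
        gcongr with i
        · exact hr i
        · exact mulVec_apply_sq_le hM f i
    _ = r ⬝ᵥ (M *ᵥ fun j => f j ^ 2) := rfl
    _ = ∑ i, r i * f i ^ 2 := by rw [dotProduct_mulVec, hstat]; rfl

def spectralGapSet (r : ι → ℝ) (M : Matrix ι ι ℝ) : Set ℝ :=
  {c : ℝ | ∃ f : ι → ℝ, f ≠ 0 ∧ r ⬝ᵥ f = 0 ∧
      c = ((∑ i, r i * (f i) ^ 2) - ∑ i, r i * ((M.mulVec f) i) ^ 2) / (∑ i, r i * (f i) ^ 2)}

lemma bddBelow_spectralGapSet (hM : M ∈ rowStochastic ℝ ι) (hr : ∀ i, 0 ≤ r i)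
    (hstat : r ᵥ* M = r) : BddBelow (spectralGapSet r M) := by
  refine ⟨0, ?_⟩
  rintro _ ⟨f, -, -, rfl⟩
  exact div_nonneg (sub_nonneg.2 (sum_weighted_sq_mulVec_le hM hr hstat f))
    (sum_nonneg fun i _ => mul_nonneg (hr i) (sq_nonneg _))

lemma sum_weighted_sq_mulVec_le_spectralGap (hM : M ∈ rowStochastic ℝ ι) (hr : ∀ i, 0 < r i)
    (hstat : r ᵥ* M = r) {f : ι → ℝ} (hf : r ⬝ᵥ f = 0) :
    ∑ i, r i * (M *ᵥ f) i ^ 2 ≤ (1 - sInf (spectralGapSet r M)) * ∑ i, r i * f i ^ 2 := by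
  rcases eq_or_ne f 0 with rfl | hf0
  · simp
  obtain ⟨i, hi⟩ := Function.ne_iff.1 hf0
  have hpos : 0 < ∑ i, r i * f i ^ 2 :=
    sum_pos' (fun j _ => mul_nonneg (hr j).le (sq_nonneg _))
      ⟨i, mem_univ i, mul_pos (hr i) (sq_pos_of_ne_zero hi)⟩
  have hle := csInf_le (bddBelow_spectralGapSet hM (fun i => (hr i).le) hstat) ⟨f, hf0, hf, rfl⟩
  rw [le_div_iff₀ hpos] at hle
  linarith

lemma norm_weightedEmbedding_mulVec_le (hM : M ∈ rowStochastic ℝ ι) (hr : ∀ i, 0 < r i)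
    (hstat : r ᵥ* M = r) {f : ι → ℝ} (hf : r ⬝ᵥ f = 0) :
    ‖weightedEmbedding r (M *ᵥ f)‖ ≤
      √(1 - sInf (spectralGapSet r M)) * ‖weightedEmbedding r f‖ := by
  have hr0 : ∀ i, 0 ≤ r i := fun i => (hr i).le
  calc ‖weightedEmbedding r (M *ᵥ f)‖
      ≤ √((1 - sInf (spectralGapSet r M)) * ‖weightedEmbedding r f‖ ^ 2) := by
        refine Real.le_sqrt_of_sq_le ?_
        rw [norm_weightedEmbedding_sq hr0, norm_weightedEmbedding_sq hr0]
        exact sum_weighted_sq_mulVec_le_spectralGap hM hr hstat hf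
    _ = _ := by rw [Real.sqrt_mul' _ (sq_nonneg _), Real.sqrt_sq (norm_nonneg _)]

variable {k : ι}

lemma deviation_mulVec_add_single (hM1 : M *ᵥ 1 = 1) (hstat : r ᵥ* M = r) (hrk : r k ≠ 0)
    (f : ι → ℝ) (a : ℝ) :
    deviation r (M *ᵥ f + Pi.single k (1 / r k * a)) =
      M *ᵥ deviation r f + a • (Pi.single k (1 / r k) - 1) := by
  have hmean : r ⬝ᵥ (M *ᵥ f + Pi.single k (1 / r k * a)) = r ⬝ᵥ f + a := by
    rw [dotProduct_add, dotProduct_mulVec, hstat, dotProduct_single, ← mul_assoc,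
      mul_one_div_cancel hrk, one_mul]
  have hsingle : (Pi.single k (1 / r k * a) : ι → ℝ) = a • Pi.single k (1 / r k) := by
    rw [mul_comm, ← smul_eq_mul, Pi.single_smul]
  rw [deviation, deviation, hmean, mulVec_sub, mulVec_smul, hM1, hsingle]
  module

lemma norm_weightedEmbedding_single_sub_one_sq (hr : ∀ i, 0 ≤ r i) (hsum : ∑ i, r i = 1)
    (hrk : r k ≠ 0) :
    ‖weightedEmbedding r (Pi.single k (1 / r k) - 1)‖ ^ 2 = 1 / r k - 1 := by
  rw [norm_weightedEmbedding_sq hr]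
  have hterm : ∀ i, r i * (Pi.single k (1 / r k) - 1 : ι → ℝ) i ^ 2 =
      r i * (Pi.single k (1 / r k) : ι → ℝ) i ^ 2 - 2 * (r i * (Pi.single k (1 / r k) : ι → ℝ) i)
        + r i := by
    intro i; simp only [Pi.sub_apply, Pi.one_apply]; ring
  simp only [hterm, sum_add_distrib, sum_sub_distrib, ← mul_sum, hsum]
  simp [Pi.single_apply]
  field_simp
  ring

theorem norm_weightedEmbedding_deviation_le (hM1 : M *ᵥ 1 = 1) (hstat : r ᵥ* M = r)
    (hsum : ∑ i, r i = 1) (hrk : r k ≠ 0) {θ L : ℝ} (hθ0 : 0 ≤ θ) (hθ1 : θ < 1)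
    (hcontr : ∀ f, r ⬝ᵥ f = 0 → ‖weightedEmbedding r (M *ᵥ f)‖ ≤ θ * ‖weightedEmbedding r f‖)
    {z : ℕ → ι → ℝ} {a : ℕ → ℝ} (hz0 : z 0 = 0)
    (hrec : ∀ t, z (t + 1) = M *ᵥ z t + Pi.single k (1 / r k * a t)) (ha : ∀ t, |a t| ≤ L)
    (t : ℕ) :
    ‖weightedEmbedding r (deviation r (z t))‖ ≤
      L * ‖weightedEmbedding r (Pi.single k (1 / r k) - 1)‖ / (1 - θ) := by
  have hL : 0 ≤ L := (abs_nonneg _).trans (ha 0)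
  refine le_div_one_sub_of_le_mul_add (x := fun t => ‖weightedEmbedding r (deviation r (z t))‖)
    hθ0 hθ1 ?_ (fun t => ?_) t
  · simp [hz0, deviation]
    positivity
  · rw [hrec, deviation_mulVec_add_single hM1 hstat hrk, map_add, map_smul]
    refine (norm_add_le _ _).trans (add_le_add (hcontr _ (dotProduct_deviation hsum _)) ?_)
    rw [norm_smul, Real.norm_eq_abs]
    exact mul_le_mul_of_nonneg_right (ha t) (norm_nonneg _)

theorem sum_sq_deviation_le (hM1 : M *ᵥ 1 = 1) (hstat : r ᵥ* M = r) (hr : ∀ i, 0 < r i)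
    (hsum : ∑ i, r i = 1) {ρ : ℝ} (hρ : 0 < ρ) (hρr : ∀ i, ρ ≤ r i) {θ L : ℝ} (hθ0 : 0 ≤ θ)
    (hθ1 : θ < 1)
    (hcontr : ∀ f, r ⬝ᵥ f = 0 → ‖weightedEmbedding r (M *ᵥ f)‖ ≤ θ * ‖weightedEmbedding r f‖)
    {z : ℕ → ι → ℝ} {a : ℕ → ℝ} (hz0 : z 0 = 0)
    (hrec : ∀ t, z (t + 1) = M *ᵥ z t + Pi.single k (1 / r k * a t)) (ha : ∀ t, |a t| ≤ L)
    (t : ℕ) :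
    ∑ i, deviation r (z t) i ^ 2 ≤ L ^ 2 / (ρ ^ 2 * (1 - θ) ^ 2) := by
  have hr0 : ∀ i, 0 ≤ r i := fun i => (hr i).le
  have hrk : r k ≠ 0 := (hr k).ne'
  have hinput : 1 / r k - 1 ≤ 1 / ρ := by
    linarith [one_div_le_one_div_of_le hρ (hρr k)]
  have h1θ : 0 < 1 - θ := sub_pos.2 hθ1
  calc ∑ i, deviation r (z t) i ^ 2 ≤ ‖weightedEmbedding r (deviation r (z t))‖ ^ 2 / ρ := by
        rw [norm_weightedEmbedding_sq hr0]
        exact sum_sq_le_sum_weighted_sq_div hρ hρr _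
    _ ≤ (L * ‖weightedEmbedding r (Pi.single k (1 / r k) - 1)‖ / (1 - θ)) ^ 2 / ρ := by
        gcongr
        exact norm_weightedEmbedding_deviation_le hM1 hstat hsum hrk hθ0 hθ1 hcontr hz0 hrec ha t
    _ = L ^ 2 * (1 / r k - 1) / ((1 - θ) ^ 2 * ρ) := by
        rw [div_pow, mul_pow, norm_weightedEmbedding_single_sub_one_sq hr0 hsum hrk, div_div]
    _ ≤ L ^ 2 * (1 / ρ) / ((1 - θ) ^ 2 * ρ) := by gcongr
    _ = L ^ 2 / (ρ ^ 2 * (1 - θ) ^ 2) := by field_simp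

end WeightedConsensus

open WeightedConsensus in
theorem stmt_12_general {n : ℕ} (M : Matrix (Fin n) (Fin n) ℝ) (r : Fin n → ℝ)
    (hrpos : ∀ i, 0 < r i) (hrsum : ∑ i, r i = 1)
    (hMnn : ∀ i j, 0 ≤ M i j) (hMrow : ∀ i, ∑ j, M i j = 1)
    (hrev : ∀ i j, r i * M i j = r j * M j i)
    (lam : ℝ)
    (hlam : lam = sInf {c : ℝ | ∃ f : Fin n → ℝ, f ≠ 0 ∧ (∑ i, r i * f i) = 0 ∧
      c = ((∑ i, r i * (f i) ^ 2) - ∑ i, r i * ((M.mulVec f) i) ^ 2)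
            / (∑ i, r i * (f i) ^ 2)})
    (hlampos : 0 < lam)
    (rstar : ℝ) (hrstar : IsLeast (Set.range r) rstar)
    (u : ℕ → Fin n → ℝ) (L : ℝ) (hu : ∀ s k, |u s k| ≤ L)
    (zc : ℕ → Fin n → Fin n → ℝ)
    (hz0 : ∀ k i, zc 0 k i = 0)
    (hrec : ∀ t k, zc (t + 1) k =
      M.mulVec (zc t k) + Pi.single k ((1 / r k) * u t k))
    (zbar : ℕ → Fin n → ℝ)
    (hzbar : ∀ t k, zbar t k = ∑ i, r i * zc t k i)
    (t : ℕ) :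
    ∑ i, ∑ k, (zc t k i - zbar t k) ^ 2 ≤
      (n : ℝ) * L ^ 2 / (rstar ^ 3 * (1 - Real.sqrt (1 - lam)) ^ 2) := by
  obtain ⟨⟨k₀, rfl⟩, hmin⟩ := hrstar
  have hρ1 : r k₀ ≤ 1 := hrsum ▸ single_le_sum (fun i _ => (hrpos i).le) (mem_univ k₀)
  have hM : M ∈ rowStochastic ℝ (Fin n) := mem_rowStochastic_iff_sum.2 ⟨hMnn, hMrow⟩
  have hstat := vecMul_eq_self_of_reversible hM hrev
  have hθ1 : √(1 - lam) < 1 := (Real.sqrt_lt' one_pos).2 (by linarith)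
  have hcontr := fun f (hf : r ⬝ᵥ f = 0) =>
    hlam ▸ norm_weightedEmbedding_mulVec_le hM hrpos hstat hf
  have hk (k : Fin n) :
      ∑ i, (zc t k i - zbar t k) ^ 2 ≤ L ^ 2 / (r k₀ ^ 3 * (1 - √(1 - lam)) ^ 2) := by
    have hdev (i : Fin n) : zc t k i - zbar t k = deviation r (zc t k) i := by
      simp [deviation, hzbar, dotProduct]
    simp only [hdev]
    refine (sum_sq_deviation_le hM.2 hstat hrpos hrsum (hrpos k₀) (fun i => hmin ⟨i, rfl⟩)
      (Real.sqrt_nonneg _) hθ1 hcontr (z := (zc · k)) (funext (hz0 k)) (hrec · k) (hu · k)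
      t).trans ?_
    have hρ := hrpos k₀
    have h1θ : 0 < 1 - √(1 - lam) := sub_pos.2 hθ1
    exact div_le_div_of_nonneg_left (sq_nonneg L) (by positivity) <|
      mul_le_mul_of_nonneg_right (pow_le_pow_of_le_one hρ.le hρ1 (by norm_num)) (sq_nonneg _)
  rw [sum_comm]
  calc _ ≤ ∑ _k : Fin n, L ^ 2 / (r k₀ ^ 3 * (1 - √(1 - lam)) ^ 2) := sum_le_sum fun k _ => hk k
    _ = _ := by simp [mul_div_assoc]

theorem stmt_12 {n : ℕ} (M : Matrix (Fin n) (Fin n) ℝ) (r : Fin n → ℝ)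
    (hrpos : ∀ i, 0 < r i) (hrsum : ∑ i, r i = 1)
    (hMnn : ∀ i j, 0 ≤ M i j) (hMrow : ∀ i, ∑ j, M i j = 1)
    (hrev : ∀ i j, r i * M i j = r j * M j i)
    (lam : ℝ)
    (hlam : lam = sInf {c : ℝ | ∃ f : Fin n → ℝ, f ≠ 0 ∧ (∑ i, r i * f i) = 0 ∧
      c = ((∑ i, r i * (f i) ^ 2) - ∑ i, r i * ((M.mulVec f) i) ^ 2)
            / (∑ i, r i * (f i) ^ 2)})
    (hlampos : 0 < lam)
    (rstar : ℝ) (hrstar : IsLeast (Set.range r) rstar)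
    (u : ℕ → Fin n → ℝ) (L : ℝ) (hu : ∀ s k, |u s k| ≤ L)
    (zc : ℕ → Fin n → Fin n → ℝ)
    (hz0 : ∀ k i, zc 0 k i = 0)
    (hrec : ∀ t k, zc (t + 1) k =
      M.mulVec (zc t k) + Pi.single k ((1 / r k) * u t k))
    (zbar : ℕ → Fin n → ℝ)
    (hzbar : ∀ t k, zbar t k = ∑ i, r i * zc t k i)
    (t : ℕ) (ht : 1 ≤ t) :
    ∑ i, ∑ k, (zc t k i - zbar t k) ^ 2 ≤
      (n : ℝ) * L ^ 2 / (rstar ^ 3 * (1 - Real.sqrt (1 - lam)) ^ 2) :=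
  stmt_12_general M r hrpos hrsum hMnn hMrow hrev lam hlam hlampos rstar hrstar u L hu zc hz0 hrec
    zbar hzbar t
end
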